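/- arXiv:1910.02524 — 2 statements merged into one kernel-verified Lean document; each statement's English description precedes it below -/
import Mathlib

section
/- Let p be a prime and Y a finite group whose Sylow p-subgroups are self-normalizing. If X ≤ Y has index coprime to p, then X is pronormal in Y. -/
/-- A group `G` belongs to the class `𝒳_p` if every Sylow `p`-subgroup is self-normalizing. -/
def SylowSelfNormalizing (p : ℕ) (G : Type*) [Group G] : Prop :=
  ∀ P : Sylow p G, Subgroup.normalizer ((P : Subgroup G) : Set G) = P

/-- The conjugate subgroup `H^g = g H g⁻¹` (conjugation by `g`). -/
def conjSub {G : Type*} [Group G] (g : G) (H : Subgroup G) : Subgroup G :=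
  H.map (MulAut.conj g).toMonoidHom

/-- A subgroup `H` of `G` is pronormal in `G` if for every `g ∈ G` the subgroups `H` and
`H^g` are conjugate by an element of `⟨H, H^g⟩`. -/
def IsPronormal {G : Type*} [Group G] (H : Subgroup G) : Prop :=
  ∀ g : G, ∃ x ∈ H ⊔ conjSub g H, conjSub x H = conjSub g H

/-!
A Sylow `p`-subgroup `P` of `Y` lies in `X`, since `p ∤ |Y : X|`. Given `g`, both `P` and `P^g`
are Sylow subgroups of `K = ⟨X, X^g⟩`, so Sylow's conjugacy theorem in `K` gives `k ∈ K` with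
`P^{kg} = P`. As `P` is self-normalizing, `kg ∈ P ≤ X`, whence `X^g = X^{k⁻¹}`.
-/

open Pointwise

lemma conjSub_eq_of_inv_mul_mem {G : Type*} [Group G] {H : Subgroup G} {a b : G}
    (hab : a⁻¹ * b ∈ H) : conjSub a H = conjSub b H := by
  change MulAut.conj a • H = MulAut.conj b • H
  rw [← mul_inv_cancel_left a b, map_mul, mul_smul, Subgroup.conj_smul_eq_self_of_mem hab]

lemma Subgroup.exists_sylow_le_of_coprime_index {p : ℕ} [Fact p.Prime] {G : Type*} [Group G]
    [Finite G] {H : Subgroup G} (hH : H.index.Coprime p) : ∃ P : Sylow p G, ↑P ≤ H := by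
  obtain ⟨Q⟩ : Nonempty (Sylow p H) := inferInstance
  have hQ : ¬ p ∣ (Q.map H.subtype).index := by
    rw [Subgroup.index_map_subtype]
    exact Nat.Prime.not_dvd_mul Fact.out Q.not_dvd_index
      ((Nat.Prime.coprime_iff_not_dvd Fact.out).mp hH.symm)
  exact ⟨(Q.2.map H.subtype).toSylow hQ, Subgroup.map_subtype_le _⟩

lemma Sylow.exists_mem_mul_mem_normalizer {p : ℕ} [Fact p.Prime] {G : Type*} [Group G]
    [Finite G] {K : Subgroup G} {P : Sylow p G} {g : G} (hP : ↑P ≤ K) (hgP : ↑(g • P) ≤ K) :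
    ∃ k ∈ K, k * g ∈ Subgroup.normalizer ((P : Subgroup G) : Set G) := by
  obtain ⟨k, hk⟩ := MulAction.exists_smul_eq K ((g • P).subtype hgP) (P.subtype hP)
  rw [Sylow.smul_subtype] at hk
  have hkgP : ((k : G) * g) • P = P := by
    rw [← smul_smul]
    exact Sylow.subtype_injective hk
  exact ⟨k, k.2, Sylow.smul_eq_iff_mem_normalizer.mp hkgP⟩

/-- If the finite group `Y` has self-normalizing Sylow `p`-subgroups and
`X ≤ Y` has index coprime to `p`, then `X` is pronormal in `Y`. -/
theorem stmt12 {p : ℕ} [Fact p.Prime] {Y : Type*} [Group Y] [Finite Y]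
    (hY : SylowSelfNormalizing p Y) (X : Subgroup Y) (hX : Nat.Coprime X.index p) :
    IsPronormal X := by
  obtain ⟨P, hPX⟩ := X.exists_sylow_le_of_coprime_index (p := p) hX
  intro g
  have hgPX : ↑(g • P) ≤ conjSub g X := by
    rw [Sylow.coe_subgroup_smul]
    exact Subgroup.map_mono hPX
  obtain ⟨k, hk, hkg⟩ :=
    Sylow.exists_mem_mul_mem_normalizer (hPX.trans le_sup_left) (hgPX.trans le_sup_right)
  rw [hY P] at hkg
  exact ⟨k⁻¹, inv_mem hk, conjSub_eq_of_inv_mul_mem (by simpa using hPX hkg)⟩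
end

section
/- Let N be a normal subgroup of a finite group G such that G/N has self-normalizing Sylow p-subgroups, and let H ≤ G have index coprime to p in G. Then H is pronormal in G if and only if H is pronormal in HN. -/
open scoped Pointwise

section ConjSub

variable {G : Type*} [Group G]

lemma mem_conjSub {g a : G} {H : Subgroup G} : a ∈ conjSub g H ↔ g⁻¹ * a * g ∈ H := by
  simp only [conjSub, Subgroup.mem_map_equiv, MulAut.conj_symm_apply]

lemma conjSub_eq_smul (g : G) (H : Subgroup G) : conjSub g H = MulAut.conj g • H := by
  ext a
  rw [mem_conjSub, Subgroup.mem_pointwise_smul_iff_inv_smul_mem]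
  simp [MulAut.smul_def]

lemma conjSub_conjSub (a b : G) (H : Subgroup G) :
    conjSub a (conjSub b H) = conjSub (a * b) H := by
  simp only [conjSub_eq_smul, map_mul, mul_smul]

lemma conjSub_mono (g : G) {H K : Subgroup G} (h : H ≤ K) : conjSub g H ≤ conjSub g K := by
  simpa only [conjSub_eq_smul] using Subgroup.pointwise_smul_le_pointwise_smul_iff.mpr h

lemma conjSub_le_of_mem {g : G} {H K : Subgroup G} (hg : g ∈ K) (h : H ≤ K) :
    conjSub g H ≤ K := by
  rw [conjSub_eq_smul]
  exact Subgroup.conj_smul_le_of_le h ⟨g, hg⟩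

lemma map_conjSub {G' : Type*} [Group G'] (f : G →* G') (g : G) (H : Subgroup G) :
    (conjSub g H).map f = conjSub (f g) (H.map f) := by
  simp only [conjSub, Subgroup.map_map]
  congr 1
  ext a
  simp [MulAut.conj_apply]

end ConjSub

section Pronormal

variable {G : Type*} [Group G]

lemma isPronormal_subgroupOf_iff {H M : Subgroup G} (hHM : H ≤ M) :
    IsPronormal (H.subgroupOf M) ↔
      ∀ g ∈ M, ∃ x ∈ H ⊔ conjSub g H, conjSub x H = conjSub g H := by
  have hmapH : (H.subgroupOf M).map M.subtype = H := by
    rw [Subgroup.subgroupOf_map_subtype, inf_eq_left.mpr hHM]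
  have hmap_sup (g : M) :
      ((H.subgroupOf M) ⊔ conjSub g (H.subgroupOf M)).map M.subtype = H ⊔ conjSub (g : G) H := by
    rw [Subgroup.map_sup, hmapH, map_conjSub, hmapH, M.subtype_apply]
  have hmap_conj (g : M) : (conjSub g (H.subgroupOf M)).map M.subtype = conjSub (g : G) H := by
    rw [map_conjSub, hmapH, M.subtype_apply]
  constructor
  · intro hp g hg
    obtain ⟨x, hx, hconj⟩ := hp ⟨g, hg⟩
    refine ⟨x, ?_, ?_⟩
    · simpa only [hmap_sup, M.subtype_apply] using Subgroup.mem_map_of_mem M.subtype hx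
    · simpa only [hmap_conj] using congrArg (Subgroup.map M.subtype) hconj
  · intro hp g
    obtain ⟨x, hx, hconj⟩ := hp g g.2
    have hxM : x ∈ M := sup_le hHM (conjSub_le_of_mem g.2 hHM) hx
    refine ⟨⟨x, hxM⟩, ?_, ?_⟩
    · rwa [← Subgroup.mem_map_iff_mem M.subtype_injective, hmap_sup]
    · apply Subgroup.map_injective M.subtype_injective
      rw [hmap_conj, hmap_conj]
      exact hconj

lemma exists_conjSub_eq_of_mem_sup {H : Subgroup G} {g k : G} (hk : k ∈ H ⊔ conjSub g H)
    (h : ∃ x ∈ H ⊔ conjSub (k⁻¹ * g) H, conjSub x H = conjSub (k⁻¹ * g) H) :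
    ∃ x ∈ H ⊔ conjSub g H, conjSub x H = conjSub g H := by
  obtain ⟨x, hx, hconj⟩ := h
  set K := H ⊔ conjSub g H
  have hsub : H ⊔ conjSub (k⁻¹ * g) H ≤ K := by
    refine sup_le le_sup_left ?_
    rw [← conjSub_conjSub]
    exact conjSub_le_of_mem (K.inv_mem hk) le_sup_right
  refine ⟨k * x, K.mul_mem hk (hsub hx), ?_⟩
  rw [← conjSub_conjSub, hconj, conjSub_conjSub, mul_inv_cancel_left]

end Pronormal

section Sylow

variable {p : ℕ} [Fact p.Prime] {G : Type*} [Group G] [Finite G]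

lemma exists_sylow_le_of_not_dvd_index {K : Subgroup G} (hK : ¬ p ∣ K.index) :
    ∃ P : Sylow p G, (P : Subgroup G) ≤ K := by
  obtain ⟨Q⟩ : Nonempty (Sylow p K) := Sylow.nonempty
  have hQ : ¬ p ∣ ((Q : Subgroup K).map K.subtype).index := by
    rw [Subgroup.index_map_subtype]
    exact Nat.Prime.not_dvd_mul Fact.out Q.not_dvd_index hK
  refine ⟨(Q.2.map K.subtype).toSylow hQ, ?_⟩
  rw [IsPGroup.toSylow_coe]
  exact Subgroup.map_subtype_le _

lemma Sylow.exists_mem_inv_mul_mem_normalizer (P : Sylow p G) {L : Subgroup G} {g : G}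
    (hP : (P : Subgroup G) ≤ L) (hgP : ((g • P : Sylow p G) : Subgroup G) ≤ L) :
    ∃ l ∈ L, g⁻¹ * l ∈ Subgroup.normalizer ((P : Subgroup G) : Set G) := by
  obtain ⟨l, hl⟩ := MulAction.exists_smul_eq L (P.subtype hP) ((g • P).subtype hgP)
  rw [Sylow.smul_subtype] at hl
  have hlg : (l : G) • P = g • P := Sylow.subtype_injective hl
  refine ⟨l, l.2, Sylow.smul_eq_iff_mem_normalizer.mp ?_⟩
  rw [mul_smul, hlg, inv_smul_smul]

lemma mem_sup_conjSub_of_not_dvd_index (hG : SylowSelfNormalizing p G) {K : Subgroup G}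
    (hK : ¬ p ∣ K.index) (g : G) : g ∈ K ⊔ conjSub g K := by
  obtain ⟨P, hPK⟩ := exists_sylow_le_of_not_dvd_index hK
  have hgP : ((g • P : Sylow p G) : Subgroup G) ≤ K ⊔ conjSub g K := by
    rw [Sylow.coe_subgroup_smul, ← conjSub_eq_smul]
    exact (conjSub_mono g hPK).trans le_sup_right
  obtain ⟨l, hl, hgl⟩ := P.exists_mem_inv_mul_mem_normalizer (hPK.trans le_sup_left) hgP
  rw [hG P] at hgl
  simpa using (K ⊔ conjSub g K).mul_mem hl (inv_mem (Subgroup.mem_sup_left (hPK hgl)))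

end Sylow

/-- Let `N ⊴ G` with `G/N ∈ 𝒳_p`, and let `H ≤ G` have index coprime
to `p`. Then `H` is pronormal in `G` iff `H` is pronormal in `HN`. -/
theorem stmt13 {p : ℕ} [Fact p.Prime] {G : Type*} [Group G] [Finite G]
    (N : Subgroup G) [N.Normal] (hQ : SylowSelfNormalizing p (G ⧸ N))
    (H : Subgroup G) (hH : Nat.Coprime H.index p) :
    IsPronormal H ↔ IsPronormal (H.subgroupOf (H ⊔ N)) := by
  rw [isPronormal_subgroupOf_iff le_sup_left]
  refine ⟨fun hp g _ ↦ hp g, fun hp g ↦ ?_⟩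
  set φ := QuotientGroup.mk' N
  have hHbar : ¬ p ∣ (H.map φ).index := fun hdvd ↦
    (Nat.Prime.coprime_iff_not_dvd Fact.out).mp hH.symm
      (hdvd.trans (H.index_map_dvd (QuotientGroup.mk'_surjective N)))
  have hgbar := mem_sup_conjSub_of_not_dvd_index hQ hHbar (φ g)
  rw [← map_conjSub, ← Subgroup.map_sup] at hgbar
  obtain ⟨k, hk, hkg⟩ := hgbar
  have hn : k⁻¹ * g ∈ N := QuotientGroup.eq.mp hkg
  exact exists_conjSub_eq_of_mem_sup hk (hp _ (Subgroup.mem_sup_right hn))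
end
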